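/- arXiv:2202.07753 — 2 statements merged into one kernel-verified Lean document; each statement's English description precedes it below -/
import Mathlib

section
/- Under assumptions (A1) and (A2), suppose for each (x,μ) that π(·;x,μ) is an invariant probability measure of L_{x,μ} having finite moments of every order. Let h : ℝ^d×ℝ^d×P₂(ℝ^d) → ℝ be jointly continuous and grow at most polynomially in y uniformly in (x,μ), and set h̄(x,μ) = ∫ h(x,y,μ) π(dy;x,μ). Fix (x,μ₂) and let v be a function such that y ↦ v(x,y,μ₂) is C², v, ∇_y v and ∇²_y v grow at most polynomially in y, and L_{x,μ₂}v(x,y,μ₂) = h(x,y,μ₂) − h̄(x,μ₂) for all y. Then for every μ₁ ∈ P₂(ℝ^d): ∫ h(x,y,μ₁) π(dy;x,μ₁) − ∫ h(x,y,μ₂) π(dy;x,μ₂) = ∫ [ h(x,y,μ₁) − h(x,y,μ₂) − (L_{x,μ₁} − L_{x,μ₂}) v(x,y,μ₂) ] π(dy;x,μ₁). Analogously, if v solves the Poisson equation at a fixed (x₂,μ) with the same regularity and growth, then for every x₁ ∈ ℝ^d: ∫ h(x₁,y,μ) π(dy;x₁,μ) − ∫ h(x₂,y,μ) π(dy;x₂,μ)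 = ∫ [ h(x₁,y,μ) − h(x₂,y,μ) − (L_{x₁,μ} − L_{x₂,μ}) v(x₂,y,μ) ] π(dy;x₁,μ). -/
open MeasureTheory

noncomputable section

/-- First partial derivative of `φ : ℝ^d → ℝ` in the `i`-th coordinate direction. -/
def pd1 {d : ℕ} (φ : (Fin d → ℝ) → ℝ) (y : Fin d → ℝ) (i : Fin d) : ℝ :=
  fderiv ℝ φ y (Pi.single i 1)

/-- Second partial derivative of `φ : ℝ^d → ℝ` in the coordinate directions `i, j`. -/
def pd2 {d : ℕ} (φ : (Fin d → ℝ) → ℝ) (y : Fin d → ℝ) (i j : Fin d) : ℝ :=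
  fderiv ℝ (fun z => fderiv ℝ φ z (Pi.single j 1)) y (Pi.single i 1)

/-- The frozen generator `L φ (y) = f(y)·∇φ(y) + a(y):∇²φ(y)`. -/
def genL {d : ℕ} (f : (Fin d → ℝ) → Fin d → ℝ) (a : (Fin d → ℝ) → Fin d → Fin d → ℝ)
    (φ : (Fin d → ℝ) → ℝ) (y : Fin d → ℝ) : ℝ :=
  (∑ i, f y i * pd1 φ y i) + ∑ i, ∑ j, a y i j * pd2 φ y i j

/-- `C_b²` functions: twice continuously differentiable, bounded together with the
first and second derivatives. -/
def CbTwo {d : ℕ} (φ : (Fin d → ℝ) → ℝ) : Prop :=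
  ContDiff ℝ 2 φ ∧ ∃ K : ℝ, ∀ y, |φ y| ≤ K ∧
    ‖iteratedFDeriv ℝ 1 φ y‖ ≤ K ∧ ‖iteratedFDeriv ℝ 2 φ y‖ ≤ K

/-- An invariant probability measure of the frozen generator:
`∫ L φ dπ = 0` for every `φ ∈ C_b²`. -/
def IsInvariantMeasure {d : ℕ} (f : (Fin d → ℝ) → Fin d → ℝ)
    (a : (Fin d → ℝ) → Fin d → Fin d → ℝ) (π : Measure (Fin d → ℝ)) : Prop :=
  IsProbabilityMeasure π ∧
    ∀ φ : (Fin d → ℝ) → ℝ, CbTwo φ → ∫ y, genL f a φ y ∂π = 0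

/-- `P₂(ℝ^d)`: Borel probability measures on `ℝ^d` with finite second moment.
Its elements enter only as parameters. -/
def ProbMeas2 (d : ℕ) : Type :=
  {μ : Measure (Fin d → ℝ) // IsProbabilityMeasure μ ∧ Integrable (fun y => ‖y‖ ^ 2) μ}

/-- Assumption (A1): uniform ellipticity and boundedness of the symmetric diffusion
matrix `a`, two bounded `y`-derivatives, and uniform Hölder continuity in `y` of `a`
and these derivatives.  The parameter `p` ranges over the frozen data `(x, μ)`. -/
def AssumptionA1 {d : ℕ} {I : Type*} (a : I → (Fin d → ℝ) → Fin d → Fin d → ℝ) : Prop :=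
  (∀ p y i j, a p y i j = a p y j i) ∧
  (∃ lm lp : ℝ, 0 < lm ∧ lm ≤ lp ∧ ∀ p y (ξ : Fin d → ℝ),
      lm * ∑ i, ξ i ^ 2 ≤ 2 * ∑ i, ∑ j, ξ i * a p y i j * ξ j ∧
      2 * ∑ i, ∑ j, ξ i * a p y i j * ξ j ≤ lp * ∑ i, ξ i ^ 2) ∧
  (∃ K : ℝ, ∀ p y i j, |a p y i j| ≤ K) ∧
  (∀ p i j, ContDiff ℝ 2 (fun y => a p y i j)) ∧
  (∃ K : ℝ, ∀ p y i j,
      ‖iteratedFDeriv ℝ 1 (fun z => a p z i j) y‖ ≤ K ∧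
      ‖iteratedFDeriv ℝ 2 (fun z => a p z i j) y‖ ≤ K) ∧
  (∃ K θ : ℝ, 0 < θ ∧ θ ≤ 1 ∧ ∀ p y y' i j,
      |a p y i j - a p y' i j| ≤ K * ‖y - y'‖ ^ θ ∧
      ‖iteratedFDeriv ℝ 1 (fun z => a p z i j) y -
        iteratedFDeriv ℝ 1 (fun z => a p z i j) y'‖ ≤ K * ‖y - y'‖ ^ θ ∧
      ‖iteratedFDeriv ℝ 2 (fun z => a p z i j) y -
        iteratedFDeriv ℝ 2 (fun z => a p z i j) y'‖ ≤ K * ‖y - y'‖ ^ θ)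

/-- Assumption (A2): dissipativity and linear growth of the drift `f`, two bounded
`y`-derivatives, and uniform Hölder continuity in `y` of `f` and these derivatives.
The parameter `p` ranges over the frozen data `(x, μ)`. -/
def AssumptionA2 {d : ℕ} {I : Type*} (f : I → (Fin d → ℝ) → Fin d → ℝ) : Prop :=
  (∃ β C : ℝ, 0 < β ∧ 0 < C ∧ ∀ p y,
      (∑ i, f p y i * y i) ≤ -β * (∑ i, y i ^ 2) + C) ∧
  (∃ C : ℝ, ∀ p y, ‖f p y‖ ≤ C * (1 + ‖y‖)) ∧
  (∀ p i, ContDiff ℝ 2 (fun y => f p y i)) ∧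
  (∃ K : ℝ, ∀ p y i,
      ‖iteratedFDeriv ℝ 1 (fun z => f p z i) y‖ ≤ K ∧
      ‖iteratedFDeriv ℝ 2 (fun z => f p z i) y‖ ≤ K) ∧
  (∃ K θ : ℝ, 0 < θ ∧ θ ≤ 1 ∧ ∀ p y y' i,
      |f p y i - f p y' i| ≤ K * ‖y - y'‖ ^ θ ∧
      ‖iteratedFDeriv ℝ 1 (fun z => f p z i) y -
        iteratedFDeriv ℝ 1 (fun z => f p z i) y'‖ ≤ K * ‖y - y'‖ ^ θ ∧
      ‖iteratedFDeriv ℝ 2 (fun z => f p z i) y -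
        iteratedFDeriv ℝ 2 (fun z => f p z i) y'‖ ≤ K * ‖y - y'‖ ^ θ)

/-!
Integrating the Poisson equation `L₂ v = h₂ - h̄₂` against `π₁` and subtracting
`∫ L₁ v dπ₁ = 0` gives the formula. The analytic point is that invariance, assumed only for
`C_b²` test functions, extends to `v`: the truncations `v χₙ`, with `χₙ = χ (·/(n+1))` for a
fixed bump `χ`, are `C_b²`, coincide with `v` near any point once `n` is large, and
`|L₁ (v χₙ)|` is dominated uniformly in `n` by a polynomial in `‖y‖` (`f` grows linearly, `a` is
bounded), which is `π₁`-integrable because `π₁` has all moments. Dominated convergence then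
yields `∫ L₁ v dπ₁ = 0`.
-/

open Filter Topology

section Derivatives

variable {d : ℕ} {φ ψ : (Fin d → ℝ) → ℝ} {y : Fin d → ℝ}

lemma abs_pd1_le (φ : (Fin d → ℝ) → ℝ) (y : Fin d → ℝ) (i : Fin d) :
    |pd1 φ y i| ≤ ‖iteratedFDeriv ℝ 1 φ y‖ := by
  rw [← norm_iteratedFDeriv_fderiv (n := 0), norm_iteratedFDeriv_zero, pd1, ← Real.norm_eq_abs]
  simpa [Pi.norm_single] using (fderiv ℝ φ y).le_opNorm (Pi.single i 1)

lemma pd2_eq_iteratedFDeriv (hφ : DifferentiableAt ℝ (fderiv ℝ φ) y) (i j : Fin d) :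
    pd2 φ y i j = iteratedFDeriv ℝ 2 φ y ![Pi.single i 1, Pi.single j 1] := by
  rw [iteratedFDeriv_two_apply, pd2, fderiv_clm_apply hφ (differentiableAt_const _)]
  simp

lemma abs_pd2_le (hφ : DifferentiableAt ℝ (fderiv ℝ φ) y) (i j : Fin d) :
    |pd2 φ y i j| ≤ ‖iteratedFDeriv ℝ 2 φ y‖ := by
  rw [pd2_eq_iteratedFDeriv hφ, ← Real.norm_eq_abs]
  simpa [Fin.prod_univ_two, Pi.norm_single] using
    (iteratedFDeriv ℝ 2 φ y).le_opNorm ![Pi.single i 1, Pi.single j 1]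

variable {f : (Fin d → ℝ) → Fin d → ℝ} {a : (Fin d → ℝ) → Fin d → Fin d → ℝ}

lemma abs_genL_le (hφ : DifferentiableAt ℝ (fderiv ℝ φ) y) {F A B₁ B₂ : ℝ}
    (hf : ∀ i, |f y i| ≤ F) (ha : ∀ i j, |a y i j| ≤ A)
    (h₁ : ‖iteratedFDeriv ℝ 1 φ y‖ ≤ B₁) (h₂ : ‖iteratedFDeriv ℝ 2 φ y‖ ≤ B₂) :
    |genL f a φ y| ≤ d * (F * B₁) + d ^ 2 * (A * B₂) := by
  have abs_mul_le {c p C B : ℝ} (hc : |c| ≤ C) (hp : |p| ≤ B) : |c * p| ≤ C * B := by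
    rw [abs_mul]
    exact mul_le_mul hc hp (abs_nonneg _) ((abs_nonneg _).trans hc)
  calc |genL f a φ y|
      ≤ ∑ i, |f y i * pd1 φ y i| + ∑ i, ∑ j, |a y i j * pd2 φ y i j| :=
        (abs_add_le _ _).trans (add_le_add (Finset.abs_sum_le_sum_abs _ _)
          ((Finset.abs_sum_le_sum_abs _ _).trans
            (Finset.sum_le_sum fun i _ => Finset.abs_sum_le_sum_abs _ _)))
    _ ≤ ∑ _i : Fin d, F * B₁ + ∑ _i : Fin d, ∑ _j : Fin d, A * B₂ := by
        gcongr with i _ i _ j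
        · exact abs_mul_le (hf i) ((abs_pd1_le φ y i).trans h₁)
        · exact abs_mul_le (ha i j) ((abs_pd2_le hφ i j).trans h₂)
    _ = d * (F * B₁) + d ^ 2 * (A * B₂) := by simp; ring

lemma genL_congr_of_eventuallyEq (h : φ =ᶠ[𝓝 y] ψ) : genL f a φ y = genL f a ψ y := by
  have hD : fderiv ℝ φ =ᶠ[𝓝 y] fderiv ℝ ψ := h.fderiv
  have hD' (j : Fin d) : (fun z => fderiv ℝ φ z (Pi.single j 1)) =ᶠ[𝓝 y]
      fun z => fderiv ℝ ψ z (Pi.single j 1) := hD.mono fun z hz => by simp only [hz]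
  simp only [genL, pd1, pd2, hD.eq_of_nhds, (hD' _).fderiv_eq]

lemma measurable_genL (hf : ∀ i, Measurable fun y => f y i)
    (ha : ∀ i j, Measurable fun y => a y i j) (φ : (Fin d → ℝ) → ℝ) :
    Measurable (genL f a φ) := by
  unfold genL pd1 pd2
  fun_prop

end Derivatives

lemma cbTwo_of_hasCompactSupport {d : ℕ} {φ : (Fin d → ℝ) → ℝ} (hφ : ContDiff ℝ 2 φ)
    (hc : HasCompactSupport φ) : CbTwo φ := by
  have bdd (k : ℕ) (hk : k ≤ 2) : ∃ C, ∀ y, ‖iteratedFDeriv ℝ k φ y‖ ≤ C :=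
    (hc.iteratedFDeriv k).exists_bound_of_continuous
      (hφ.continuous_iteratedFDeriv (by exact_mod_cast hk))
  obtain ⟨C₀, h₀⟩ := bdd 0 (by norm_num)
  obtain ⟨C₁, h₁⟩ := bdd 1 (by norm_num)
  obtain ⟨C₂, h₂⟩ := bdd 2 le_rfl
  refine ⟨hφ, max C₀ (max C₁ C₂), fun y => ⟨?_, ?_, ?_⟩⟩
  · rw [← Real.norm_eq_abs, ← norm_iteratedFDeriv_zero (𝕜 := ℝ)]
    exact (h₀ y).trans (le_max_left _ _)
  · exact (h₁ y).trans ((le_max_left _ _).trans (le_max_right _ _))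
  · exact (h₂ y).trans ((le_max_right _ _).trans (le_max_right _ _))

section Leibniz

variable {𝕜 E A : Type*} [NontriviallyNormedField 𝕜] [NormedAddCommGroup E] [NormedSpace 𝕜 E]
  [NormedRing A] [NormedAlgebra 𝕜 A]

lemma norm_iteratedFDeriv_mul_le_of_le {f g : E → A} {N : WithTop ℕ∞} (hf : ContDiff 𝕜 N f)
    (hg : ContDiff 𝕜 N g) (x : E) {k : ℕ} (hk : k ≤ N) {B C : ℝ}
    (hB : ∀ i ≤ k, ‖iteratedFDeriv 𝕜 i f x‖ ≤ B) (hC : ∀ i ≤ k, ‖iteratedFDeriv 𝕜 i g x‖ ≤ C) :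
    ‖iteratedFDeriv 𝕜 k (fun y => f y * g y) x‖ ≤ 2 ^ k * B * C := by
  have hB₀ : 0 ≤ B := (norm_nonneg _).trans (hB 0 k.zero_le)
  calc ‖iteratedFDeriv 𝕜 k (fun y => f y * g y) x‖
      ≤ ∑ i ∈ Finset.range (k + 1), (k.choose i : ℝ) * ‖iteratedFDeriv 𝕜 i f x‖ *
          ‖iteratedFDeriv 𝕜 (k - i) g x‖ := norm_iteratedFDeriv_mul_le hf hg x hk
    _ ≤ ∑ i ∈ Finset.range (k + 1), (k.choose i : ℝ) * B * C := by
        gcongr with i hi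
        · exact hB i (Nat.lt_succ_iff.mp (Finset.mem_range.mp hi))
        · exact hC _ (Nat.sub_le k i)
    _ = 2 ^ k * B * C := by
        rw [← Finset.sum_mul, ← Finset.sum_mul, ← Nat.cast_sum, Nat.sum_range_choose]
        push_cast; ring

end Leibniz

theorem exists_cutoff_seq {E : Type*} [NormedAddCommGroup E] [NormedSpace ℝ E]
    [FiniteDimensional ℝ E] (N : ℕ) :
    ∃ (χ : ℕ → E → ℝ) (M : ℝ), (∀ n, ContDiff ℝ N (χ n)) ∧ (∀ n, HasCompactSupport (χ n)) ∧
      (∀ n, ∀ k ≤ N, ∀ y, ‖iteratedFDeriv ℝ k (χ n) y‖ ≤ M) ∧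
      ∀ y, ∀ᶠ n in atTop, χ n =ᶠ[𝓝 y] 1 := by
  let b : ContDiffBump (0 : E) := ⟨1, 2, one_pos, one_lt_two⟩
  have hbd (k : ℕ) (hk : k ≤ N) : ∃ C, ∀ z, ‖iteratedFDeriv ℝ k b z‖ ≤ C :=
    (b.hasCompactSupport.iteratedFDeriv k).exists_bound_of_continuous
      ((b.contDiff (n := k)).continuous_iteratedFDeriv le_rfl)
  choose! C hC using hbd
  set c : ℕ → ℝ := fun n => ((n : ℝ) + 1)⁻¹ with hc
  have hc₀ (n : ℕ) : 0 < c n := by positivity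
  refine ⟨fun n y => b (c n • y), ∑ k ∈ Finset.range (N + 1), C k,
    fun n => b.contDiff.comp (contDiff_const_smul _),
    fun n => b.hasCompactSupport.comp_smul (hc₀ n).ne', fun n k hk y => ?_, fun y => ?_⟩
  · rw [iteratedFDeriv_comp_const_smul _ b.contDiff, norm_smul, norm_pow,
      Real.norm_of_nonneg (hc₀ n).le]
    calc c n ^ k * ‖iteratedFDeriv ℝ k b (c n • y)‖ ≤ 1 * C k :=
          mul_le_mul (pow_le_one₀ (hc₀ n).le (inv_le_one_of_one_le₀ (by simp)))
            (hC k hk _) (norm_nonneg _) zero_le_one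
      _ ≤ ∑ k ∈ Finset.range (N + 1), C k := by
          rw [one_mul]
          exact Finset.single_le_sum (fun j hj => (norm_nonneg _).trans
            (hC j (Nat.lt_succ_iff.mp (Finset.mem_range.mp hj)) 0))
            (Finset.mem_range.mpr (Nat.lt_succ_of_le hk))
  · filter_upwards [eventually_ge_atTop ⌈‖y‖⌉₊] with n hn
    have hy : y ∈ Metric.ball (0 : E) (n + 1) := by
      rw [mem_ball_zero_iff]
      exact (Nat.ceil_le.mp hn).trans_lt (lt_add_one _)
    filter_upwards [Metric.isOpen_ball.mem_nhds hy] with z hz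
    refine b.one_of_mem_closedBall ?_
    rw [mem_closedBall_zero_iff, norm_smul, Real.norm_of_nonneg (hc₀ n).le, hc,
      inv_mul_le_iff₀ (by positivity), mul_one]
    exact (mem_ball_zero_iff.mp hz).le

section Moments

variable {E : Type*} [NormedAddCommGroup E] [MeasurableSpace E] {π : Measure E}

lemma integrable_mul_one_add_norm_pow (hmom : ∀ m : ℕ, Integrable (fun y => ‖y‖ ^ m) π)
    (K : ℝ) (q : ℕ) : Integrable (fun y => K * (1 + ‖y‖ ^ q)) π :=
  (((hmom 0).add (hmom q)).const_mul K).congr (ae_of_all _ fun y => by simp)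

lemma integrable_norm_mul_mul_one_add_norm_pow
    (hmom : ∀ m : ℕ, Integrable (fun y => ‖y‖ ^ m) π) (K : ℝ) (q : ℕ) :
    Integrable (fun y => ‖y‖ * (K * (1 + ‖y‖ ^ q))) π :=
  (((hmom 1).add (hmom (q + 1))).const_mul K).congr (ae_of_all _ fun y => by simp; ring)

end Moments

namespace IsInvariantMeasure

variable {d : ℕ} {f f₂ : (Fin d → ℝ) → Fin d → ℝ} {a a₂ : (Fin d → ℝ) → Fin d → Fin d → ℝ}
  {π : Measure (Fin d → ℝ)} {Cf Ca : ℝ} {v ρ : (Fin d → ℝ) → ℝ}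

theorem integral_genL_eq_zero (hπ : IsInvariantMeasure f a π)
    (hf : ∀ i, Measurable fun y => f y i) (hfg : ∀ y, ‖f y‖ ≤ Cf * (1 + ‖y‖))
    (ha : ∀ i j, Measurable fun y => a y i j) (hab : ∀ y i j, |a y i j| ≤ Ca)
    (hv : ContDiff ℝ 2 v) (hvρ : ∀ k ≤ 2, ∀ y, ‖iteratedFDeriv ℝ k v y‖ ≤ ρ y)
    (hρ : Integrable ρ π) (hρ' : Integrable (fun y => ‖y‖ * ρ y) π) :
    Integrable (genL f a v) π ∧ ∫ y, genL f a v y ∂π = 0 := by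
  obtain ⟨χ, M, hχ, hχc, hχM, hχ1⟩ := exists_cutoff_seq (E := Fin d → ℝ) 2
  set w : ℕ → (Fin d → ℝ) → ℝ := fun n y => v y * χ n y
  have hw (n : ℕ) : ContDiff ℝ 2 (w n) := hv.mul (hχ n)
  have hwv (y) : ∀ᶠ n in atTop, genL f a (w n) y = genL f a v y :=
    (hχ1 y).mono fun n hn => genL_congr_of_eventuallyEq (hn.mono fun z hz => by simp [w, hz])
  set bound : (Fin d → ℝ) → ℝ :=
    fun y => d * (Cf * (1 + ‖y‖) * (2 * ρ y * M)) + d ^ 2 * (Ca * (4 * ρ y * M))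
  have hbound : Integrable bound π := by
    have hexp : bound = fun y => (2 * d * Cf * M) * ρ y + (2 * d * Cf * M) * (‖y‖ * ρ y) +
        (4 * d ^ 2 * Ca * M) * ρ y := by
      funext y; ring
    rw [hexp]
    exact ((hρ.const_mul _).add (hρ'.const_mul _)).add (hρ.const_mul _)
  have hwb (n : ℕ) (y) : ‖genL f a (w n) y‖ ≤ bound y := by
    have hD (k : ℕ) (hk : k ≤ 2) : ‖iteratedFDeriv ℝ k (w n) y‖ ≤ 2 ^ k * ρ y * M :=
      norm_iteratedFDeriv_mul_le_of_le hv (hχ n) y (by exact_mod_cast hk)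
        (fun i hi => hvρ i (hi.trans hk) y) (fun i hi => hχM n i (hi.trans hk) y)
    rw [Real.norm_eq_abs]
    refine abs_genL_le ((hw n).fderiv_right (m := 1) le_rfl |>.differentiable one_ne_zero _)
      (fun i => ?_) (hab y) ((hD 1 one_le_two).trans_eq (by ring))
      ((hD 2 le_rfl).trans_eq (by ring))
    rw [← Real.norm_eq_abs]
    exact (norm_le_pi_norm (f y) i).trans (hfg y)
  have hmeas (φ) : AEStronglyMeasurable (genL f a φ) π :=
    (measurable_genL hf ha φ).aestronglyMeasurable
  have hlim := tendsto_integral_of_dominated_convergence bound (fun n => hmeas (w n)) hbound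
    (fun n => ae_of_all _ (hwb n))
    (ae_of_all _ fun y => tendsto_const_nhds.congr' ((hwv y).mono fun _ h => h.symm))
  have hzero (n : ℕ) : ∫ y, genL f a (w n) y ∂π = 0 :=
    hπ.2 _ (cbTwo_of_hasCompactSupport (hw n) (hχc n).mul_left)
  refine ⟨hbound.mono' (hmeas v) (ae_of_all _ fun y => ?_),
    tendsto_nhds_unique (hlim.congr hzero) tendsto_const_nhds⟩
  obtain ⟨n, hn⟩ := (hwv y).exists
  exact hn ▸ hwb n y

theorem transfer_formula (hπ : IsInvariantMeasure f a π)
    (hf : ∀ i, Measurable fun y => f y i) (hfg : ∀ y, ‖f y‖ ≤ Cf * (1 + ‖y‖))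
    (ha : ∀ i j, Measurable fun y => a y i j) (hab : ∀ y i j, |a y i j| ≤ Ca)
    (hv : ContDiff ℝ 2 v) (hvρ : ∀ k ≤ 2, ∀ y, ‖iteratedFDeriv ℝ k v y‖ ≤ ρ y)
    (hρ : Integrable ρ π) (hρ' : Integrable (fun y => ‖y‖ * ρ y) π)
    {h₁ h₂ : (Fin d → ℝ) → ℝ} {c : ℝ} (hh₁ : Integrable h₁ π)
    (hpois : ∀ y, genL f₂ a₂ v y = h₂ y - c) :
    (∫ y, h₁ y ∂π) - c = ∫ y, (h₁ y - h₂ y - (genL f a v y - genL f₂ a₂ v y)) ∂π := by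
  have := hπ.1
  obtain ⟨hL, hL₀⟩ := hπ.integral_genL_eq_zero hf hfg ha hab hv hvρ hρ hρ'
  have hrw : (fun y => h₁ y - h₂ y - (genL f a v y - genL f₂ a₂ v y)) =
      fun y => h₁ y - c - genL f a v y := by
    funext y; rw [hpois]; ring
  rw [hrw, integral_sub (f := fun y => h₁ y - c) (hh₁.sub (integrable_const c)) hL,
    integral_sub hh₁ (integrable_const c), hL₀, integral_const, probReal_univ, one_smul, sub_zero]

end IsInvariantMeasure

theorem transfer_formula_differences_general
    (d : ℕ)
    (f : (Fin d → ℝ) → (Fin d → ℝ) → ProbMeas2 d → Fin d → ℝ)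
    (a : (Fin d → ℝ) → (Fin d → ℝ) → ProbMeas2 d → Fin d → Fin d → ℝ)
    (π : (Fin d → ℝ) → ProbMeas2 d → Measure (Fin d → ℝ))
    (hA1 : AssumptionA1 (fun p : (Fin d → ℝ) × ProbMeas2 d => fun y => a p.1 y p.2))
    (hA2 : AssumptionA2 (fun p : (Fin d → ℝ) × ProbMeas2 d => fun y => f p.1 y p.2))
    (hπ : ∀ x μ, IsInvariantMeasure (fun y => f x y μ) (fun y => a x y μ) (π x μ))
    (hπmom : ∀ x μ (q : ℕ), Integrable (fun y => ‖y‖ ^ q) (π x μ))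
    (h : (Fin d → ℝ) → (Fin d → ℝ) → ProbMeas2 d → ℝ)
    (hcont : ∀ μ, Continuous fun p : (Fin d → ℝ) × (Fin d → ℝ) => h p.1 p.2 μ)
    (hpoly : ∃ K : ℝ, ∃ q : ℕ, ∀ x y μ, |h x y μ| ≤ K * (1 + ‖y‖ ^ q)) :
    (∀ (x : Fin d → ℝ) (μ₂ : ProbMeas2 d) (v : (Fin d → ℝ) → ℝ),
      ContDiff ℝ 2 v →
      (∃ K : ℝ, ∃ q : ℕ, ∀ y, |v y| ≤ K * (1 + ‖y‖ ^ q) ∧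
          ‖iteratedFDeriv ℝ 1 v y‖ ≤ K * (1 + ‖y‖ ^ q) ∧
          ‖iteratedFDeriv ℝ 2 v y‖ ≤ K * (1 + ‖y‖ ^ q)) →
      (∀ y, genL (fun z => f x z μ₂) (fun z => a x z μ₂) v y =
          h x y μ₂ - ∫ z, h x z μ₂ ∂(π x μ₂)) →
      ∀ μ₁ : ProbMeas2 d,
        (∫ y, h x y μ₁ ∂(π x μ₁)) - (∫ y, h x y μ₂ ∂(π x μ₂)) =
          ∫ y, (h x y μ₁ - h x y μ₂ -
            (genL (fun z => f x z μ₁) (fun z => a x z μ₁) v y -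
              genL (fun z => f x z μ₂) (fun z => a x z μ₂) v y)) ∂(π x μ₁)) ∧
    (∀ (x₂ : Fin d → ℝ) (μ : ProbMeas2 d) (v : (Fin d → ℝ) → ℝ),
      ContDiff ℝ 2 v →
      (∃ K : ℝ, ∃ q : ℕ, ∀ y, |v y| ≤ K * (1 + ‖y‖ ^ q) ∧
          ‖iteratedFDeriv ℝ 1 v y‖ ≤ K * (1 + ‖y‖ ^ q) ∧
          ‖iteratedFDeriv ℝ 2 v y‖ ≤ K * (1 + ‖y‖ ^ q)) →
      (∀ y, genL (fun z => f x₂ z μ) (fun z => a x₂ z μ) v y =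
          h x₂ y μ - ∫ z, h x₂ z μ ∂(π x₂ μ)) →
      ∀ x₁ : Fin d → ℝ,
        (∫ y, h x₁ y μ ∂(π x₁ μ)) - (∫ y, h x₂ y μ ∂(π x₂ μ)) =
          ∫ y, (h x₁ y μ - h x₂ y μ -
            (genL (fun z => f x₁ z μ) (fun z => a x₁ z μ) v y -
              genL (fun z => f x₂ z μ) (fun z => a x₂ z μ) v y)) ∂(π x₁ μ)) := by
  obtain ⟨Kh, qh, hh⟩ := hpoly
  obtain ⟨-, ⟨Cf, hCf⟩, hf, -, -⟩ := hA2
  obtain ⟨-, -, ⟨Ca, hCa⟩, ha, -, -⟩ := hA1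
  have key (x : Fin d → ℝ) (μ : ProbMeas2 d) (f₂ : (Fin d → ℝ) → Fin d → ℝ)
      (a₂ : (Fin d → ℝ) → Fin d → Fin d → ℝ) (h₂ : (Fin d → ℝ) → ℝ) (c : ℝ)
      (v : (Fin d → ℝ) → ℝ) (hv : ContDiff ℝ 2 v) (K : ℝ) (q : ℕ)
      (hvg : ∀ y, |v y| ≤ K * (1 + ‖y‖ ^ q) ∧ ‖iteratedFDeriv ℝ 1 v y‖ ≤ K * (1 + ‖y‖ ^ q) ∧
          ‖iteratedFDeriv ℝ 2 v y‖ ≤ K * (1 + ‖y‖ ^ q))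
      (hpois : ∀ y, genL f₂ a₂ v y = h₂ y - c) :
      (∫ y, h x y μ ∂(π x μ)) - c = ∫ y, (h x y μ - h₂ y -
        (genL (fun z => f x z μ) (fun z => a x z μ) v y - genL f₂ a₂ v y)) ∂(π x μ) := by
    have hvρ : ∀ k ≤ 2, ∀ y, ‖iteratedFDeriv ℝ k v y‖ ≤ K * (1 + ‖y‖ ^ q) := by
      intro k hk y
      interval_cases k
      · simpa using (hvg y).1
      · exact (hvg y).2.1
      · exact (hvg y).2.2
    have hhx : Integrable (fun y => h x y μ) (π x μ) :=
      (integrable_mul_one_add_norm_pow (hπmom x μ) Kh qh).mono'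
        ((hcont μ).comp (Continuous.prodMk_right x)).aestronglyMeasurable
        (ae_of_all _ fun y => (Real.norm_eq_abs _).trans_le (hh x y μ))
    exact (hπ x μ).transfer_formula (fun i => (hf (x, μ) i).continuous.measurable) (hCf (x, μ))
      (fun i j => (ha (x, μ) i j).continuous.measurable) (hCa (x, μ)) hv hvρ
      (integrable_mul_one_add_norm_pow (hπmom x μ) K q)
      (integrable_norm_mul_mul_one_add_norm_pow (hπmom x μ) K q) hhx hpois
  exact ⟨fun x μ₂ v hv ⟨K, q, hvg⟩ hpois μ₁ => key x μ₁ _ _ _ _ v hv K q hvg hpois,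
    fun x₂ μ v hv ⟨K, q, hvg⟩ hpois x₁ => key x₁ μ _ _ _ _ v hv K q hvg hpois⟩

/-- difference transfer formulas for averages against the invariant
measures, in the measure argument and in the frozen spatial argument. -/
theorem transfer_formula_differences
    (d : ℕ) (hd : 0 < d)
    (f : (Fin d → ℝ) → (Fin d → ℝ) → ProbMeas2 d → Fin d → ℝ)
    (a : (Fin d → ℝ) → (Fin d → ℝ) → ProbMeas2 d → Fin d → Fin d → ℝ)
    (π : (Fin d → ℝ) → ProbMeas2 d → Measure (Fin d → ℝ))
    (hA1 : AssumptionA1 (fun p : (Fin d → ℝ) × ProbMeas2 d => fun y => a p.1 y p.2))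
    (hA2 : AssumptionA2 (fun p : (Fin d → ℝ) × ProbMeas2 d => fun y => f p.1 y p.2))
    (hπ : ∀ x μ, IsInvariantMeasure (fun y => f x y μ) (fun y => a x y μ) (π x μ))
    (hπmom : ∀ x μ (q : ℕ), Integrable (fun y => ‖y‖ ^ q) (π x μ))
    (h : (Fin d → ℝ) → (Fin d → ℝ) → ProbMeas2 d → ℝ)
    (hcont : ∀ μ, Continuous fun p : (Fin d → ℝ) × (Fin d → ℝ) => h p.1 p.2 μ)
    (hpoly : ∃ K : ℝ, ∃ q : ℕ, ∀ x y μ, |h x y μ| ≤ K * (1 + ‖y‖ ^ q)) :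
    (∀ (x : Fin d → ℝ) (μ₂ : ProbMeas2 d) (v : (Fin d → ℝ) → ℝ),
      ContDiff ℝ 2 v →
      (∃ K : ℝ, ∃ q : ℕ, ∀ y, |v y| ≤ K * (1 + ‖y‖ ^ q) ∧
          ‖iteratedFDeriv ℝ 1 v y‖ ≤ K * (1 + ‖y‖ ^ q) ∧
          ‖iteratedFDeriv ℝ 2 v y‖ ≤ K * (1 + ‖y‖ ^ q)) →
      (∀ y, genL (fun z => f x z μ₂) (fun z => a x z μ₂) v y =
          h x y μ₂ - ∫ z, h x z μ₂ ∂(π x μ₂)) →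
      ∀ μ₁ : ProbMeas2 d,
        (∫ y, h x y μ₁ ∂(π x μ₁)) - (∫ y, h x y μ₂ ∂(π x μ₂)) =
          ∫ y, (h x y μ₁ - h x y μ₂ -
            (genL (fun z => f x z μ₁) (fun z => a x z μ₁) v y -
              genL (fun z => f x z μ₂) (fun z => a x z μ₂) v y)) ∂(π x μ₁)) ∧
    (∀ (x₂ : Fin d → ℝ) (μ : ProbMeas2 d) (v : (Fin d → ℝ) → ℝ),
      ContDiff ℝ 2 v →
      (∃ K : ℝ, ∃ q : ℕ, ∀ y, |v y| ≤ K * (1 + ‖y‖ ^ q) ∧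
          ‖iteratedFDeriv ℝ 1 v y‖ ≤ K * (1 + ‖y‖ ^ q) ∧
          ‖iteratedFDeriv ℝ 2 v y‖ ≤ K * (1 + ‖y‖ ^ q)) →
      (∀ y, genL (fun z => f x₂ z μ) (fun z => a x₂ z μ) v y =
          h x₂ y μ - ∫ z, h x₂ z μ ∂(π x₂ μ)) →
      ∀ x₁ : Fin d → ℝ,
        (∫ y, h x₁ y μ ∂(π x₁ μ)) - (∫ y, h x₂ y μ ∂(π x₂ μ)) =
          ∫ y, (h x₁ y μ - h x₂ y μ -
            (genL (fun z => f x₁ z μ) (fun z => a x₁ z μ) v y -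
              genL (fun z => f x₂ z μ) (fun z => a x₂ z μ) v y)) ∂(π x₁ μ)) :=
  transfer_formula_differences_general d f a π hA1 hA2 hπ hπmom h hcont hpoly
end
end

section
/- In the one-dimensional explicit invariant density setup, the function ρ is Lebesgue-integrable on ℝ, so Z ∈ (0,∞) and π is a probability density; and π is an invariant density for the generator Lφ = fφ' + aφ'': for every twice continuously differentiable φ : ℝ → ℝ with compact support, ∫_ℝ ( f(y)φ'(y) + a(y)φ''(y) ) π(y) dy = 0. -/
open MeasureTheory

noncomputable section

/-- The explicit (unnormalized) one-dimensional invariant density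
`ρ(y) = a(y)⁻¹ exp(∫₀^y f(s)/a(s) ds)`. -/
def rho1 (a f : ℝ → ℝ) (y : ℝ) : ℝ :=
  (a y)⁻¹ * Real.exp (∫ s in (0:ℝ)..y, f s / a s)

/-- The normalizing constant `Z = ∫_ℝ ρ(y) dy`. -/
def Z1 (a f : ℝ → ℝ) : ℝ := ∫ y, rho1 a f y

/-- The normalized invariant density `π = ρ / Z`. -/
def piDen (a f : ℝ → ℝ) (y : ℝ) : ℝ := rho1 a f y / Z1 a f

/-- The average `h̄ = ∫_ℝ h(y) π(y) dy`. -/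
def hbar (a f h : ℝ → ℝ) : ℝ := ∫ y, h y * piDen a f y

/-- `F(y) = ∫_{−∞}^y (h(s) − h̄) π(s) ds`. -/
def Fint (a f h : ℝ → ℝ) (y : ℝ) : ℝ :=
  ∫ s in Set.Iic y, (h s - hbar a f h) * piDen a f s

/-- The explicit solution `v(y) = ∫₀^y F(s)/(a(s)π(s)) ds` of the one-dimensional
Poisson equation `a v'' + f v' = h − h̄`. -/
def vsol (a f h : ℝ → ℝ) (y : ℝ) : ℝ :=
  ∫ s in (0:ℝ)..y, Fint a f h s / (a s * piDen a f s)

/-!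
Write `G y = ∫₀^y f/a`, so that `ρ = a⁻¹ e^G` and `a ρ = e^G`. Dividing the dissipativity
condition by `a ∈ [λ₋, λ₊]` shows that `f/a` is again dissipative, and then
`G y + (β/4λ₊) y²`, whose derivative has the sign of `-y` once `|y|` is large, is bounded
above: `ρ` is dominated by a Gaussian. Invariance holds because `(f φ' + a φ'') ρ = (e^G φ')'`
is the derivative of a compactly supported `C¹` function.
-/

open Set Filter

theorem HasCompactSupport.integral_deriv_eq_zero {E : Type*} [NormedAddCommGroup E]
    [NormedSpace ℝ E] {w : ℝ → E} (hw : ContDiff ℝ 1 w) (hs : HasCompactSupport w) :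
    ∫ x, deriv w x = 0 :=
  integral_eq_zero_of_hasDerivAt_of_integrable
    (fun x => (hw.differentiable one_ne_zero x).hasDerivAt)
    ((hw.continuous_deriv le_rfl).integrable_of_hasCompactSupport hs.deriv)
    (hw.continuous.integrable_of_hasCompactSupport hs)

theorem Continuous.contDiff_one_integral {q : ℝ → ℝ} (hq : Continuous q) (a : ℝ) :
    ContDiff ℝ 1 (fun y => ∫ s in a..y, q s) :=
  contDiff_one_iff_deriv.2
    ⟨fun y => (hq.integral_hasStrictDerivAt a y).hasDerivAt.differentiableAt,
      by rw [funext (hq.deriv_integral q a)]; exact hq⟩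

theorem Continuous.bddAbove_range_of_monotoneOn_of_antitoneOn {g : ℝ → ℝ} (hg : Continuous g)
    {a b : ℝ} (hmono : MonotoneOn g (Iic a)) (hanti : AntitoneOn g (Ici b)) :
    BddAbove (range g) := by
  obtain ⟨M, hM⟩ := isCompact_Icc.bddAbove_image (f := g) (K := Icc a b) hg.continuousOn
  refine ⟨max M (max (g a) (g b)), ?_⟩
  rintro _ ⟨y, rfl⟩
  rcases le_or_gt y a with hya | hay
  · exact (hmono hya self_mem_Iic hya).trans (by simp)
  rcases le_or_gt b y with hby | hyb
  · exact (hanti self_mem_Ici hby hby).trans (by simp)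
  · exact (hM (mem_image_of_mem g ⟨hay.le, hyb.le⟩)).trans (le_max_left _ _)

theorem exists_integral_le_sub_mul_sq {q : ℝ → ℝ} (hq : Continuous q) {β C : ℝ} (hβ : 0 < β)
    (hdis : ∀ y, q y * y ≤ -β * y ^ 2 + C) :
    ∃ K, ∀ y, ∫ s in (0:ℝ)..y, q s ≤ K - β / 4 * y ^ 2 := by
  set g : ℝ → ℝ := fun y => (∫ s in (0:ℝ)..y, q s) + β / 4 * y ^ 2 with hg_def
  have hg : ∀ y, HasDerivAt g (q y + β / 2 * y) y := fun y => by
    refine ((hq.integral_hasStrictDerivAt 0 y).hasDerivAt.add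
      ((hasDerivAt_pow 2 y).const_mul (β / 4))).congr_deriv ?_
    push_cast
    ring
  have hgc : Continuous g := continuous_iff_continuousAt.2 fun y => (hg y).continuousAt
  have hgd : Differentiable ℝ g := fun y => (hg y).differentiableAt
  set R := √(2 * C / β)
  have hR : 0 ≤ R := Real.sqrt_nonneg _
  have hfar : ∀ y, R < |y| → (q y + β / 2 * y) * y < 0 := by
    intro y hy
    have hy2 : 2 * C / β < y ^ 2 := by simpa [sq_abs] using Real.lt_sq_of_sqrt_lt hy
    rw [div_lt_iff₀ hβ] at hy2
    nlinarith [hdis y]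
  have hmono : MonotoneOn g (Iic (-R)) := by
    refine monotoneOn_of_deriv_nonneg (convex_Iic _) hgc.continuousOn hgd.differentiableOn
      fun y hy => ?_
    rw [interior_Iic, mem_Iio] at hy
    have hy0 : y < 0 := by linarith
    have := hfar y (by rw [abs_of_neg hy0]; linarith)
    rw [(hg y).deriv]
    nlinarith
  have hanti : AntitoneOn g (Ici R) := by
    refine antitoneOn_of_deriv_nonpos (convex_Ici _) hgc.continuousOn hgd.differentiableOn
      fun y hy => ?_
    rw [interior_Ici, mem_Ioi] at hy
    have hy0 : 0 < y := by linarith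
    have := hfar y (by rw [abs_of_pos hy0]; linarith)
    rw [(hg y).deriv]
    nlinarith
  obtain ⟨K, hK⟩ := hgc.bddAbove_range_of_monotoneOn_of_antitoneOn hmono hanti
  exact ⟨K, fun y => by have := hK (mem_range_self y); simp only [hg_def] at this; linarith⟩

theorem integrable_exp_integral_of_mul_le {q : ℝ → ℝ} (hq : Continuous q) {β C : ℝ}
    (hβ : 0 < β) (hdis : ∀ y, q y * y ≤ -β * y ^ 2 + C) :
    Integrable (fun y => Real.exp (∫ s in (0:ℝ)..y, q s)) := by
  obtain ⟨K, hK⟩ := exists_integral_le_sub_mul_sq hq hβ hdis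
  refine ((integrable_exp_neg_mul_sq (by positivity : 0 < β / 4)).const_mul (Real.exp K)).mono'
    (Real.continuous_exp.comp (hq.contDiff_one_integral 0).continuous).aestronglyMeasurable
    (Eventually.of_forall fun y => ?_)
  rw [Real.norm_eq_abs, Real.abs_exp, ← Real.exp_add]
  exact Real.exp_le_exp.2 (by linarith [hK y])

theorem div_mul_le_neg_div_mul_sq_add_div {x y a lm lp β C : ℝ} (hlm : 0 < lm)
    (hlma : lm ≤ a) (halp : a ≤ lp) (hβ : 0 ≤ β) (hC : 0 ≤ C)
    (h : x * y ≤ -β * y ^ 2 + C) :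
    x / a * y ≤ -(β / lp) * y ^ 2 + C / lm := by
  have ha : 0 < a := hlm.trans_le hlma
  calc x / a * y = x * y / a := div_mul_eq_mul_div _ _ _
    _ ≤ (-β * y ^ 2 + C) / a := by gcongr
    _ = -(β * y ^ 2 / a) + C / a := by ring
    _ ≤ -(β * y ^ 2 / lp) + C / lm := by gcongr
    _ = -(β / lp) * y ^ 2 + C / lm := by ring

section InvariantDensity

variable {a f : ℝ → ℝ}

theorem rho1_pos (ha : ∀ y, 0 < a y) (y : ℝ) : 0 < rho1 a f y :=
  mul_pos (inv_pos.2 (ha y)) (Real.exp_pos _)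

theorem integrable_rho1 {lm lp β C : ℝ} (hac : Continuous a) (hfc : Continuous f)
    (hlm : 0 < lm) (hbnd : ∀ y, lm ≤ a y ∧ a y ≤ lp) (hβ : 0 < β)
    (hdis : ∀ y, f y * y ≤ -β * y ^ 2 + C) :
    Integrable (rho1 a f) := by
  have ha : ∀ y, 0 < a y := fun y => hlm.trans_le (hbnd y).1
  have hlp : 0 < lp := (ha 0).trans_le (hbnd 0).2
  have hC : 0 ≤ C := by simpa using hdis 0
  have hexp := integrable_exp_integral_of_mul_le (hfc.div hac fun y => (ha y).ne')
    (div_pos hβ hlp) fun y =>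
      div_mul_le_neg_div_mul_sq_add_div hlm (hbnd y).1 (hbnd y).2 hβ.le hC (hdis y)
  refine hexp.bdd_mul (c := lm⁻¹) (hac.inv₀ fun y => (ha y).ne').aestronglyMeasurable
    (Eventually.of_forall fun y => ?_)
  rw [norm_inv, Real.norm_of_nonneg (ha y).le]
  exact inv_anti₀ hlm (hbnd y).1

theorem Z1_pos (ha : ∀ y, 0 < a y) (hint : Integrable (rho1 a f)) : 0 < Z1 a f := by
  have hsupp : Function.support (rho1 a f) = univ :=
    eq_univ_of_forall fun y => (rho1_pos ha y).ne'
  rw [Z1, integral_pos_iff_support_of_nonneg (fun y => (rho1_pos ha y).le) hint, hsupp]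
  simp

theorem integral_piDen (hZ : Z1 a f ≠ 0) : ∫ y, piDen a f y = 1 := by
  simp only [piDen]
  rw [integral_div]
  exact div_self hZ

theorem hasDerivAt_exp_integral_mul_deriv (hac : Continuous a) (hfc : Continuous f)
    (ha : ∀ y, a y ≠ 0) {φ : ℝ → ℝ} (hφ : ContDiff ℝ 2 φ) (y : ℝ) :
    HasDerivAt (fun y => Real.exp (∫ s in (0:ℝ)..y, f s / a s) * deriv φ y)
      ((f y * deriv φ y + a y * deriv (deriv φ) y) * rho1 a f y) y := by
  refine (((hfc.div hac ha).integral_hasStrictDerivAt 0 y).hasDerivAt.exp.mul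
    (hφ.differentiable_deriv_two y).hasDerivAt).congr_deriv ?_
  simp only [rho1, Pi.div_apply]
  field_simp [ha y]

theorem integral_generator_mul_rho1_eq_zero (hac : Continuous a) (hfc : Continuous f)
    (ha : ∀ y, a y ≠ 0) {φ : ℝ → ℝ} (hφ : ContDiff ℝ 2 φ) (hφs : HasCompactSupport φ) :
    ∫ y, (f y * deriv φ y + a y * deriv (deriv φ) y) * rho1 a f y = 0 := by
  have hw : ContDiff ℝ 1 (fun y => Real.exp (∫ s in (0:ℝ)..y, f s / a s) * deriv φ y) :=
    (Real.contDiff_exp.comp ((hfc.div hac ha).contDiff_one_integral 0)).mul (hφ.deriv' (n := 1))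
  rw [← HasCompactSupport.integral_deriv_eq_zero hw hφs.deriv.mul_left]
  congr 1 with y
  exact ((hasDerivAt_exp_integral_mul_deriv hac hfc ha hφ y).deriv).symm

end InvariantDensity

theorem one_dim_invariant_density_general
    (a f : ℝ → ℝ) (lm lp β C : ℝ)
    (hac : Continuous a) (hfc : Continuous f)
    (hlm : 0 < lm) (hbnd : ∀ y, lm ≤ a y ∧ a y ≤ lp)
    (hβ : 0 < β) (hdis : ∀ y, f y * y ≤ -β * y ^ 2 + C) :
    Integrable (rho1 a f) ∧ 0 < Z1 a f ∧ (∫ y, piDen a f y) = 1 ∧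
      ∀ φ : ℝ → ℝ, ContDiff ℝ 2 φ → HasCompactSupport φ →
        (∫ y, (f y * deriv φ y + a y * deriv (deriv φ) y) * piDen a f y) = 0 := by
  have ha : ∀ y, 0 < a y := fun y => hlm.trans_le (hbnd y).1
  have hint := integrable_rho1 hac hfc hlm hbnd hβ hdis
  have hZ := Z1_pos ha hint
  refine ⟨hint, hZ, integral_piDen hZ.ne', fun φ hφ hφs => ?_⟩
  simp only [piDen, mul_div_assoc']
  rw [integral_div, integral_generator_mul_rho1_eq_zero hac hfc (fun y => (ha y).ne') hφ hφs,
    zero_div]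

/-- the explicit one-dimensional density `π = ρ/Z` is a probability
density and is invariant for the generator `Lφ = fφ' + aφ''`. -/
theorem one_dim_invariant_density
    (a f : ℝ → ℝ) (lm lp β C : ℝ)
    (hac : Continuous a) (hfc : Continuous f)
    (hlm : 0 < lm) (hbnd : ∀ y, lm ≤ a y ∧ a y ≤ lp)
    (hβ : 0 < β) (hC : 0 < C) (hdis : ∀ y, f y * y ≤ -β * y ^ 2 + C) :
    Integrable (rho1 a f) ∧ 0 < Z1 a f ∧ (∫ y, piDen a f y) = 1 ∧
      ∀ φ : ℝ → ℝ, ContDiff ℝ 2 φ → HasCompactSupport φ →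
        (∫ y, (f y * deriv φ y + a y * deriv (deriv φ) y) * piDen a f y) = 0 :=
  one_dim_invariant_density_general a f lm lp β C hac hfc hlm hbnd hβ hdis

end
end
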